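/- arXiv:1206.0606 — 2 statements merged into one kernel-verified Lean document; each statement's English description precedes it below -/
import Mathlib

section
/- A prime p is a Wieferich prime to base b of order at least w (i.e., ν_p(b^{p−1} − 1) ≥ w + 1) if and only if p^{w+1} is an overpseudoprime to base b. -/
/-- Multiplicative order of `b` modulo `n`. -/
noncomputable def ordn (b n : ℕ) : ℕ := orderOf (b : ZMod n)

/-- `n` is an overpseudoprime to base `b`: composite, coprime to `b`, and the
multiplicative order of `b` mod `d` is the same for all divisors `d > 1` of `n`. -/
def Overpsp (b n : ℕ) : Prop :=
  1 < n ∧ ¬ n.Prime ∧ Nat.Coprime b n ∧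
    ∀ d, d ∣ n → 1 < d → ordn b d = ordn b n

/-- `n` is primover to base `b`: prime or overpseudoprime to base `b`. -/
def Primover (b n : ℕ) : Prop := n.Prime ∨ Overpsp b n

/-- The cyclotomic coset of `2` modulo `n` containing `s`. -/
def coset (n s : ℕ) : Finset ℕ := (Finset.range n).image (fun k => 2 ^ k * s % n)

/-- The number of distinct cyclotomic cosets of `2` modulo `n`. -/
def numCosets (n : ℕ) : ℕ := ((Finset.Ioo 0 n).image (coset n)).card

/-- `Φ_N(b)` as a natural number. -/
noncomputable def PhiN (N b : ℕ) : ℕ := ((Polynomial.cyclotomic N ℤ).eval (b : ℤ)).toNat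

/-!
Let `r` be the order of `b` modulo `p`, so that `p - 1 = r t` with `p ∤ t`. Since
`b ^ (p - 1) - 1 = (b ^ r - 1) (1 + b ^ r + ⋯ + b ^ (r (t - 1)))` and the second factor is
`≡ t ≢ 0 (mod p)`, the congruence `b ^ (p - 1) ≡ 1` holds modulo `p ^ (w + 1)` iff
`b ^ r ≡ 1` does, i.e. iff the order of `b` modulo `p ^ (w + 1)` is still `r`. As the divisors
`d > 1` of `p ^ (w + 1)` are the powers `p ^ j`, `j ≥ 1`, whose orders all lie between
`ord_p b` and `ord_{p ^ (w + 1)} b` in the divisibility order, that is exactly the overpseudoprime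
condition.
-/

theorem Prime.pow_dvd_pow_sub_pow_iff {R : Type*} [CommRing R] [IsDomain R] {p x y : R}
    {n : ℕ} (hp : Prime p) (hxy : p ∣ x - y) (hx : ¬p ∣ x) (hn : ¬p ∣ (n : R)) (k : ℕ) :
    p ^ k ∣ x ^ n - y ^ n ↔ p ^ k ∣ x - y := by
  rw [← geom_sum₂_mul]
  exact ⟨hp.pow_dvd_of_dvd_mul_left k (not_dvd_geom_sum₂ hp hxy hx hn), fun h => h.mul_left _⟩

theorem Nat.pow_modEq_one_iff_of_modEq_one {p x t : ℕ} (hp : p.Prime) (hx : x ≡ 1 [MOD p])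
    (ht : ¬p ∣ t) (k : ℕ) : x ^ t ≡ 1 [MOD p ^ k] ↔ x ≡ 1 [MOD p ^ k] := by
  have hpZ : _root_.Prime (p : ℤ) := Nat.prime_iff_prime_int.mp hp
  have hxZ : (p : ℤ) ∣ x - 1 := by simpa using (Nat.modEq_iff_dvd.mp hx.symm)
  have hpx : ¬(p : ℤ) ∣ x := fun h =>
    hpZ.not_dvd_one (by simpa using _root_.dvd_sub h hxZ)
  rw [Nat.ModEq.comm, Nat.modEq_iff_dvd, Nat.ModEq.comm, Nat.modEq_iff_dvd]
  push_cast
  rw [← one_pow t, hpZ.pow_dvd_pow_sub_pow_iff hxZ hpx (by exact_mod_cast ht), one_pow]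

theorem le_padicValNat_sub_one_iff_modEq {p x : ℕ} [Fact p.Prime] (hx : 1 < x) (k : ℕ) :
    k ≤ padicValNat p (x - 1) ↔ x ≡ 1 [MOD p ^ k] := by
  rw [← padicValNat_dvd_iff_le (by omega), Nat.ModEq.comm, Nat.modEq_iff_dvd' hx.le]

theorem ordn_dvd_iff_modEq (b n r : ℕ) : ordn b n ∣ r ↔ b ^ r ≡ 1 [MOD n] := by
  rw [ordn, orderOf_dvd_iff_pow_eq_one, ← Nat.cast_pow, ← Nat.cast_one,
    ZMod.natCast_eq_natCast_iff]

theorem ordn_dvd_ordn_of_dvd (b : ℕ) {m n : ℕ} (h : m ∣ n) : ordn b m ∣ ordn b n := by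
  simpa [ordn] using orderOf_map_dvd (ZMod.castHom h (ZMod m)).toMonoidHom (b : ZMod n)

theorem ordn_eq_ordn_iff_of_dvd (b : ℕ) {m n : ℕ} (h : m ∣ n) :
    ordn b n = ordn b m ↔ b ^ ordn b m ≡ 1 [MOD n] := by
  rw [← ordn_dvd_iff_modEq]
  exact ⟨fun e => e ▸ dvd_rfl, fun d => Nat.dvd_antisymm d (ordn_dvd_ordn_of_dvd b h)⟩

theorem overpsp_prime_pow_iff {p b k : ℕ} (hp : p.Prime) (hbp : b.Coprime p) (hk : 2 ≤ k) :
    Overpsp b (p ^ k) ↔ ordn b (p ^ k) = ordn b p := by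
  constructor
  · rintro ⟨-, -, -, hord⟩
    exact (hord p (dvd_pow_self p (by omega)) hp.one_lt).symm
  · intro h
    refine ⟨Nat.one_lt_pow (by omega) hp.one_lt, Nat.Prime.not_prime_pow hk, hbp.pow_right k,
      fun d hd hd1 => ?_⟩
    obtain ⟨j, hj, rfl⟩ := (Nat.dvd_prime_pow hp).mp hd
    have hj0 : j ≠ 0 := by rintro rfl; simp at hd1
    refine Nat.dvd_antisymm (ordn_dvd_ordn_of_dvd b (pow_dvd_pow p hj)) ?_
    exact h ▸ ordn_dvd_ordn_of_dvd b (dvd_pow_self p hj0)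

theorem stmt8_general (p b w : ℕ) (hp : p.Prime) (hb : 1 < b) (hpb : ¬ p ∣ b)
    (hw : 1 ≤ w) :
    w + 1 ≤ padicValNat p (b ^ (p - 1) - 1) ↔ Overpsp b (p ^ (w + 1)) := by
  have := Fact.mk hp
  have hp2 := hp.two_le
  have hbp : b.Coprime p := (hp.coprime_iff_not_dvd.mpr hpb).symm
  set r := ordn b p
  obtain ⟨t, ht⟩ : r ∣ p - 1 := by
    rw [ordn_dvd_iff_modEq, ← Nat.totient_prime hp]
    exact Nat.ModEq.pow_totient hbp
  have hpt : ¬p ∣ t := fun h =>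
    Nat.not_dvd_of_pos_of_lt (by omega) (by omega)
      (h.trans (Dvd.intro_left r ht.symm))
  have hbr : b ^ r ≡ 1 [MOD p] := (ordn_dvd_iff_modEq b p r).mp dvd_rfl
  rw [le_padicValNat_sub_one_iff_modEq (Nat.one_lt_pow (by omega) hb), ht, pow_mul,
    Nat.pow_modEq_one_iff_of_modEq_one hp hbr hpt,
    ← ordn_eq_ordn_iff_of_dvd b (dvd_pow_self p (by omega)),
    overpsp_prime_pow_iff hp hbp (by omega)]

theorem stmt8 (p b w : ℕ) (hp : p.Prime) (hodd : Odd p) (hb : 1 < b) (hpb : ¬ p ∣ b)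
    (hw : 1 ≤ w) :
    w + 1 ≤ padicValNat p (b ^ (p - 1) - 1) ↔ Overpsp b (p ^ (w + 1)) :=
  stmt8_general p b w hp hb hpb hw
end

section
/- Let N > 1, b > 1, and let p be the greatest prime divisor of N. Then gcd(N, Φ_N(b)) equals 1 or p. -/
open Polynomial in
lemma PhiN_cast (N b : ℕ) (hb : 1 < b) :
    ((PhiN N b : ℤ)) = (cyclotomic N ℤ).eval (b : ℤ) := by
  have : (0:ℤ) < (cyclotomic N ℤ).eval (b : ℤ) :=
    cyclotomic_pos' N (by exact_mod_cast hb)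
  simp [PhiN, Int.toNat_of_nonneg this.le]

open Polynomial in
/-- If a prime `q` divides both `N` and `Φ_N(b)`, then `b` is a primitive
`ordCompl[q] N`-th root of unity mod `q`. -/
lemma primRoot_of_dvd {N b q : ℕ} (hN : 1 < N) (hb : 1 < b) (hq : q.Prime)
    (hqN : q ∣ N) (hqPhi : (q:ℤ) ∣ (cyclotomic N ℤ).eval (b : ℤ)) :
    IsPrimitiveRoot (b : ZMod q) (ordCompl[q] N) := by
  haveI : Fact q.Prime := ⟨hq⟩
  set k := N.factorization q with hk
  set m := ordCompl[q] N with hm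
  have hNpos : N ≠ 0 := by omega
  have hqm : ¬ q ∣ m := Nat.not_dvd_ordCompl hq hNpos
  have hNeq : q ^ k * m = N := Nat.ordProj_mul_ordCompl_eq_self N q
  haveI : NeZero ((m : ZMod q)) := ⟨by
    simpa [ZMod.natCast_eq_zero_iff] using hqm⟩
  have hroot : (cyclotomic N (ZMod q)).IsRoot ((b:ℕ) : ZMod q) := by
    have := eval_intCast_map (Int.castRingHom (ZMod q)) (cyclotomic N ℤ) (b : ℤ)
    rw [map_cyclotomic_int] at this
    have h0 : (((cyclotomic N ℤ).eval (b:ℤ) : ℤ) : ZMod q) = 0 := by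
      rwa [ZMod.intCast_zmod_eq_zero_iff_dvd]
    simp only [IsRoot.def]
    rw [show ((b:ℕ) : ZMod q) = (((b:ℕ) : ℤ) : ZMod q) by push_cast; ring, this]
    simpa using h0
  rw [← hNeq] at hroot
  exact (isRoot_cyclotomic_prime_pow_mul_iff_of_charP).mp hroot

open Polynomial Finset in
/-- `Φ_N(b) ∣ ∑_{i<p} (b^{N/p})^i` for a prime `p ∣ N`. -/
lemma phi_dvd_geom_sum {N b p : ℕ} (hN : 1 < N) (hb : 1 < b) (hp : p.Prime) (hpN : p ∣ N) :
    (cyclotomic N ℤ).eval (b:ℤ) ∣ ∑ i ∈ range p, ((b:ℤ) ^ (N/p)) ^ i := by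
  set M := N / p with hM
  have hMpos : 0 < M := Nat.div_pos (Nat.le_of_dvd (by omega) hpN) hp.pos
  have hMN : M < N := Nat.div_lt_self (by omega) hp.one_lt
  have hMdvd : M ∣ N := Nat.div_dvd_of_dvd hpN
  -- polynomial divisibility
  have hpoly : cyclotomic N ℤ * (X ^ M - 1) ∣ (X : ℤ[X]) ^ N - 1 := by
    rw [← prod_cyclotomic_eq_X_pow_sub_one hMpos, ← prod_cyclotomic_eq_X_pow_sub_one (by omega)]
    have hsub : insert N M.divisors ⊆ N.divisors := by
      intro d hd
      rcases Finset.mem_insert.mp hd with rfl | hd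
      · exact Nat.mem_divisors_self _ (by omega)
      · exact Nat.mem_divisors.mpr ⟨(Nat.mem_divisors.mp hd).1.trans hMdvd, by omega⟩
    have hNnot : N ∉ M.divisors := fun h => absurd (Nat.le_of_dvd hMpos (Nat.mem_divisors.mp h).1) (by omega)
    calc cyclotomic N ℤ * ∏ d ∈ M.divisors, cyclotomic d ℤ
        = ∏ d ∈ insert N M.divisors, cyclotomic d ℤ := by rw [Finset.prod_insert hNnot]
      _ ∣ ∏ d ∈ N.divisors, cyclotomic d ℤ := Finset.prod_dvd_prod_of_subset _ _ _ hsub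
  have heval := map_dvd (evalRingHom (b:ℤ)) hpoly
  simp only [map_mul, map_sub, map_pow, map_one, coe_evalRingHom, eval_X, eval_pow,
    eval_one, eval_sub, eval_mul] at heval
  -- b^N - 1 = (∑ i<p, (b^M)^i) * (b^M - 1)
  have hgeom : ((b:ℤ))^N - 1 = (∑ i ∈ range p, ((b:ℤ) ^ M) ^ i) * ((b:ℤ)^M - 1) := by
    rw [geom_sum_mul, ← pow_mul, Nat.div_mul_cancel hpN]
  rw [hgeom] at heval
  have hne : ((b:ℤ))^M - 1 ≠ 0 := by
    have : (1:ℤ) < (b:ℤ)^M := one_lt_pow₀ (by exact_mod_cast hb) (by omega)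
    omega
  rcases heval with ⟨c, hc⟩
  refine ⟨c, ?_⟩
  have := mul_right_cancel₀ hne (by linarith [hc] :
    (∑ i ∈ range p, ((b:ℤ) ^ M) ^ i) * ((b:ℤ)^M - 1) = eval (↑b) (cyclotomic N ℤ) * c * ((b:ℤ)^M - 1))
  linarith [this]

open Finset in
/-- The key square-nondivisibility: if `c ≡ 1 [p]` (and `c ≡ 1 [4]` when `p = 2`),
then `p^2 ∤ ∑_{i<p} c^i`. -/
lemma not_sq_dvd_geom_sum {p : ℕ} (hp : p.Prime) {c : ℤ} (h1 : (p:ℤ) ∣ c - 1)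
    (h2 : p = 2 → (4:ℤ) ∣ c - 1) : ¬ ((p:ℤ)^2 ∣ ∑ i ∈ range p, c ^ i) := by
  intro hdvd
  rcases eq_or_ne p 2 with rfl | hodd
  · have h4 := h2 rfl
    have : (∑ i ∈ range 2, c ^ i) = 2 + (c - 1) := by
      simp [Finset.sum_range_succ]; ring
    rw [this] at hdvd
    have : (4:ℤ) ∣ 2 := by
      have := Int.dvd_sub (by exact_mod_cast hdvd) h4
      simpa using this
    omega
  · obtain ⟨a, ha⟩ := h1
    have hc : c = 1 + p * a := by linarith
    -- c^i ≡ 1 + i*p*a mod p^2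
    have key : ∀ i : ℕ, (p:ℤ)^2 ∣ c ^ i - (1 + i * p * a) := by
      intro i
      induction i with
      | zero => simp
      | succ n ih =>
        have : c ^ (n+1) - (1 + (n+1 : ℕ) * p * a)
            = (c ^ n - (1 + n * p * a)) * c + (n * a^2) * (p:ℤ)^2 := by
          rw [pow_succ, hc]; push_cast; ring
        rw [this]
        exact dvd_add (ih.mul_right c) (Dvd.intro_left _ rfl)
    have hsum : (p:ℤ)^2 ∣ (∑ i ∈ range p, c ^ i) - (p + (∑ i ∈ range p, (i:ℤ)) * p * a) := by
      have : (∑ i ∈ range p, c ^ i) - (p + (∑ i ∈ range p, (i:ℤ)) * p * a)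
          = ∑ i ∈ range p, (c ^ i - (1 + i * p * a)) := by
        rw [Finset.sum_sub_distrib]
        simp [Finset.sum_add_distrib, Finset.sum_mul]
      rw [this]
      exact Finset.dvd_sum fun i _ => key i
    -- 2 * ∑ i = p*(p-1)
    have hgauss : (∑ i ∈ range p, (i:ℤ)) * 2 = p * (p - 1) := by
      have := Finset.sum_range_id_mul_two p
      have : ((∑ i ∈ range p, i) * 2 : ℕ) = p * (p - 1) := this
      have hcast := congrArg (Nat.cast : ℕ → ℤ) this
      push_cast [Nat.cast_sub hp.one_lt.le] at hcast
      push_cast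
      linarith
    have h2S : (p:ℤ)^2 ∣ 2 * (∑ i ∈ range p, c ^ i) - 2 * p := by
      have heq : 2 * (∑ i ∈ range p, c ^ i) - 2 * p
          = 2 * ((∑ i ∈ range p, c ^ i) - (p + (∑ i ∈ range p, (i:ℤ)) * p * a))
            + (p:ℤ)^2 * ((p-1) * a) := by
        have : (∑ i ∈ range p, (i:ℤ)) * 2 * p * a = (p:ℤ)^2 * ((p-1)*a) := by
          rw [hgauss]; ring
        linarith [this]
      rw [heq]
      exact dvd_add (hsum.mul_left 2) (Dvd.intro _ rfl)
    have hp2 : (p:ℤ)^2 ∣ 2 * p := by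
      have := Int.dvd_sub (hdvd.mul_left 2) h2S
      simpa using this
    have : (p:ℤ) ∣ 2 := by
      have := hp2
      rw [sq] at this
      exact (mul_dvd_mul_iff_left (by exact_mod_cast hp.ne_zero : (p:ℤ) ≠ 0)).mp
        (by rwa [mul_comm 2 (p:ℤ)] at this)
    have hnat : (p:ℕ) ∣ 2 := Int.ofNat_dvd.mp (Int.dvd_natAbs.mpr this)
    exact hodd ((Nat.prime_dvd_prime_iff_eq hp Nat.prime_two).mp hnat)

open Polynomial Finset in
theorem stmt15 (N b p : ℕ) (hN : 1 < N) (hb : 1 < b) (hp : p.Prime) (hpN : p ∣ N)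
    (hmax : ∀ q : ℕ, q.Prime → q ∣ N → q ≤ p) :
    Nat.gcd N (PhiN N b) = 1 ∨ Nat.gcd N (PhiN N b) = p := by
  set g := Nat.gcd N (PhiN N b) with hg
  by_cases hg1 : g = 1
  · exact Or.inl hg1
  right
  have hgN : g ∣ N := Nat.gcd_dvd_left _ _
  have hgPhi : g ∣ PhiN N b := Nat.gcd_dvd_right _ _
  have hg0 : g ≠ 0 := by
    intro h
    have := Nat.eq_zero_of_gcd_eq_zero_left (hg ▸ h)
    omega
  -- every prime dividing g equals p
  have hkey : ∀ {q : ℕ}, q.Prime → q ∣ g → q = p := by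
    intro q hq hqg
    have hqN : q ∣ N := hqg.trans hgN
    have hqPhiZ : (q:ℤ) ∣ (cyclotomic N ℤ).eval (b : ℤ) := by
      rw [← PhiN_cast N b hb]
      exact_mod_cast Int.natCast_dvd_natCast.mpr (hqg.trans hgPhi)
    have hprim := primRoot_of_dvd hN hb hq hqN hqPhiZ
    haveI : Fact q.Prime := ⟨hq⟩
    set m := ordCompl[q] N with hm
    have hmpos : 0 < m := Nat.ordCompl_pos q (by omega)
    have hbne : ((b:ℕ) : ZMod q) ≠ 0 := by
      intro h0
      have := hprim.pow_eq_one
      rw [h0, zero_pow hmpos.ne'] at this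
      exact zero_ne_one this
    have hmdvd : m ∣ q - 1 :=
      hprim.eq_orderOf ▸ ZMod.orderOf_dvd_card_sub_one hbne
    have hq2 := hq.two_le
    have hmlt : m < q := lt_of_le_of_lt (Nat.le_of_dvd (by omega) hmdvd) (by omega)
    -- q ≤ p by hmax; if q ≠ p then p ∣ m and p ≤ m < q ≤ p
    have hqp := hmax q hq hqN
    by_contra hne
    have hpm : p ∣ m := by
      have hNeq : q ^ (N.factorization q) * m = N := Nat.ordProj_mul_ordCompl_eq_self N q
      have hpqk : ¬ p ∣ q ^ (N.factorization q) := by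
        intro hd
        exact hne ((Nat.prime_dvd_prime_iff_eq hp hq).mp (hp.dvd_of_dvd_pow hd)).symm
      have : p ∣ q ^ (N.factorization q) * m := by rw [hNeq]; exact hpN
      exact (Nat.Coprime.dvd_of_dvd_mul_left
        (Nat.Coprime.pow_right _ ((Nat.coprime_primes hp hq).mpr (fun h => hne h.symm))) this)
    have := Nat.le_of_dvd hmpos hpm
    omega
  -- hence g is a power of p
  have hgpow := Nat.eq_prime_pow_of_unique_prime_dvd hg0 (fun hd hdg => hkey hd hdg)
  set j := g.primeFactorsList.length with hj
  have hj1 : 1 ≤ j := by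
    rcases Nat.eq_zero_or_pos j with h0 | h; · rw [h0, pow_zero] at hgpow; exact absurd hgpow hg1
    exact h
  rcases eq_or_lt_of_le hj1 with h1 | h2
  · rw [hgpow, ← h1, pow_one]
  -- j ≥ 2 : contradiction
  exfalso
  have hsqg : p ^ 2 ∣ g := hgpow ▸ pow_dvd_pow p h2
  have hsqN : p ^ 2 ∣ N := hsqg.trans hgN
  have hpg : p ∣ g := hgpow ▸ dvd_pow_self p (by omega)
  have hpPhiZ : (p:ℤ) ∣ (cyclotomic N ℤ).eval (b : ℤ) := by
    rw [← PhiN_cast N b hb]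
    exact_mod_cast Int.natCast_dvd_natCast.mpr (hpg.trans hgPhi)
  have hprim := primRoot_of_dvd hN hb hp hpN hpPhiZ
  haveI : Fact p.Prime := ⟨hp⟩
  set m := ordCompl[p] N with hm
  set k := N.factorization p with hk
  have hk2 : 2 ≤ k := (Nat.Prime.pow_dvd_iff_le_factorization hp (by omega)).mp hsqN
  have hNeq : p ^ k * m = N := Nat.ordProj_mul_ordCompl_eq_self N p
  have hNp : N / p = p ^ (k - 1) * m := by
    rw [← hNeq]
    rw [show p ^ k = p * p ^ (k-1) by rw [← pow_succ']; congr 1; omega]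
    rw [mul_assoc, Nat.mul_div_cancel_left _ hp.pos]
  -- b^(N/p) ≡ 1 mod p
  have hbpow : ((b:ℕ) : ZMod p) ^ (N / p) = 1 := by
    rw [hNp, pow_mul', hprim.pow_eq_one, one_pow]
  set c : ℤ := (b:ℤ) ^ (N / p) with hc
  have hc1 : (p:ℤ) ∣ c - 1 := by
    have : ((c - 1 : ℤ) : ZMod p) = 0 := by
      rw [hc]
      push_cast
      rw [hbpow]; ring
    exact_mod_cast (ZMod.intCast_zmod_eq_zero_iff_dvd _ p).mp this
  have hc4 : p = 2 → (4:ℤ) ∣ c - 1 := by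
    rintro rfl
    -- N/p is even, c is an odd square
    have heven : 2 ∣ N / 2 := by
      rw [hNp]
      exact Dvd.dvd.mul_right (dvd_pow_self 2 (by omega)) m
    obtain ⟨t, ht⟩ := heven
    have hcodd : ¬ (2:ℤ) ∣ c := by
      intro h2c
      have : ((c:ℤ) : ZMod 2) = 0 := (ZMod.intCast_zmod_eq_zero_iff_dvd _ 2).mpr h2c
      rw [hc] at this
      push_cast at this
      rw [hbpow] at this
      exact one_ne_zero this
    have hcsq : c = ((b:ℤ)^t) * ((b:ℤ)^t) := by
      rw [hc, ht, ← pow_add]; ring_nf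
    have hdodd : Odd ((b:ℤ)^t) := by
      rcases Int.even_or_odd ((b:ℤ)^t) with he | ho
      · exfalso; apply hcodd; rw [hcsq]; exact (he.mul_right _).two_dvd
      · exact ho
    obtain ⟨e, he⟩ := hdodd
    rw [hcsq, he]
    exact ⟨e*e + e, by ring⟩
  have hsqPhiZ : (p:ℤ)^2 ∣ (cyclotomic N ℤ).eval (b : ℤ) := by
    rw [← PhiN_cast N b hb]
    have : (p:ℕ)^2 ∣ PhiN N b := hsqg.trans hgPhi
    exact_mod_cast Int.natCast_dvd_natCast.mpr this
  exact not_sq_dvd_geom_sum hp hc1 hc4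
    (hsqPhiZ.trans (phi_dvd_geom_sum hN hb hp hpN))
end
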